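/- Let G be a finite graph with symmetric edge weights and Ω a finite subset of vertices with at least two boundary vertices. Then the first nontrivial eigenvalue of the Dirichlet-to-Neumann operator satisfies λ_1(Ω) ≥ ½ · h(Ω̃) · h_J(Ω̃), where h(Ω̃) is the classical Cheeger constant of Ω̃ and h_J(Ω̃) is the Jammes-type Cheeger constant. -/

import Mathlib

/-!
Let `u` be a competitor for `λ₁`, let `t` be a median of `u` on `Ω̄`, and let `w` be the positive
or the negative part of `u - t`, so that `w` is supported on a set of at most half the measure.
Integrating over `s > 0` the Cheeger inequalities for the superlevel sets `{w² > s}` (co-area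
formula) gives `h · ‖w‖²_{Ω̄} ≤ T` and `h_J · ‖w‖²_{δΩ} ≤ T`, where
`T = Σ_{xy} μ_{xy} |w(x)² - w(y)²|`, while Cauchy–Schwarz gives `T² ≤ 2 D(w) ‖w‖²_{Ω̄}`.
Hence `h h_J ‖w‖²_{δΩ} ≤ 2 D(w)`. Adding the two parts, `D(u) ≥ D(w₊) + D(w₋)`, and
`‖u - t‖²_{δΩ} ≥ ‖u‖²_{δΩ} = 1` because `u` has boundary mean zero.

The infimum defining `λ₁` is over a nonempty set: by the maximum principle the Dirichlet problem
on `Ω` is uniquely solvable, and two boundary vertices carry a nonzero mean-zero datum.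
-/

open scoped Classical
open Finset

variable {V : Type*} [Fintype V]

/-- The vertex boundary δΩ of a finite set Ω of vertices. -/
noncomputable def bdry (μ : V → V → ℝ) (Ω : Finset V) : Finset V :=
  Finset.univ.filter fun x => x ∉ Ω ∧ ∃ y ∈ Ω, 0 < μ x y

/-- Ω̄ = Ω ∪ δΩ. -/
noncomputable def clos (μ : V → V → ℝ) (Ω : Finset V) : Finset V :=
  Ω ∪ bdry μ Ω

/-- The vertex measure m on Ω̄. -/
noncomputable def vm (μ : V → V → ℝ) (Ω : Finset V) (x : V) : ℝ :=
  if x ∈ Ω then ∑ y, μ x y else ∑ y ∈ Ω, μ x y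

/-- m(B) = Σ_{x ∈ B} m_x. -/
noncomputable def msum (μ : V → V → ℝ) (Ω : Finset V) (B : Finset V) : ℝ :=
  ∑ x ∈ B, vm μ Ω x

/-- Sum over the edges e = {x,y} of E(Ω,Ω̄) of μ_{xy} · F x y (for symmetric F). -/
noncomputable def edgeSum (μ : V → V → ℝ) (Ω : Finset V) (F : V → V → ℝ) : ℝ :=
  (∑ x ∈ Ω, ∑ y ∈ Ω, μ x y * F x y) / 2 +
    ∑ x ∈ Ω, ∑ y ∈ bdry μ Ω, μ x y * F x y

/-- Dirichlet energy D_Ω(f). -/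
noncomputable def dirichlet (μ : V → V → ℝ) (Ω : Finset V) (f : V → ℝ) : ℝ :=
  edgeSum μ Ω fun x y => (f x - f y) ^ 2

/-- Dirichlet form D_Ω(f,g). -/
noncomputable def dform (μ : V → V → ℝ) (Ω : Finset V) (f g : V → ℝ) : ℝ :=
  edgeSum μ Ω fun x y => (f x - f y) * (g x - g y)

/-- μ(∂_Ω A): total weight of the edges of E(Ω,Ω̄) with exactly one endpoint in A. -/
noncomputable def cut (μ : V → V → ℝ) (Ω : Finset V) (A : Finset V) : ℝ :=
  edgeSum μ Ω fun x y => if (x ∈ A) ↔ (y ∈ A) then 0 else 1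

/-- The graph Laplacian Δf(x) (used for x ∈ Ω). -/
noncomputable def lap (μ : V → V → ℝ) (Ω : Finset V) (f : V → ℝ) (x : V) : ℝ :=
  (∑ y, μ x y * (f y - f x)) / vm μ Ω x

/-- The outward normal derivative ∂f/∂n(z) (used for z ∈ δΩ). -/
noncomputable def nderiv (μ : V → V → ℝ) (Ω : Finset V) (f : V → ℝ) (z : V) : ℝ :=
  (∑ x ∈ Ω, μ z x * (f z - f x)) / vm μ Ω z

/-- f is harmonic on Ω. -/
def IsHarmonic (μ : V → V → ℝ) (Ω : Finset V) (u : V → ℝ) : Prop :=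
  ∀ x ∈ Ω, lap μ Ω u x = 0

/-- Adjacency in the graph Ω̃ = (Ω̄, E(Ω,Ω̄)). -/
def tilAdj (μ : V → V → ℝ) (Ω : Finset V) (x y : V) : Prop :=
  0 < μ x y ∧ (x ∈ Ω ∨ y ∈ Ω)

/-- The graph Ω̃ is connected. -/
def TilConnected (μ : V → V → ℝ) (Ω : Finset V) : Prop :=
  ∀ x ∈ clos μ Ω, ∀ y ∈ clos μ Ω, Relation.ReflTransGen (tilAdj μ Ω) x y

/-- λ₁(Ω): the first nontrivial eigenvalue of the Dirichlet-to-Neumann operator,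
characterized by its Rayleigh quotient. -/
noncomputable def lambda1 (μ : V → V → ℝ) (Ω : Finset V) : ℝ :=
  sInf { r : ℝ | ∃ u : V → ℝ, IsHarmonic μ Ω u ∧
    (∑ x ∈ bdry μ Ω, u x ^ 2 * vm μ Ω x) = 1 ∧
    (∑ x ∈ bdry μ Ω, u x * vm μ Ω x) = 0 ∧
    r = dirichlet μ Ω u }

/-- The Escobar-type Cheeger constant h_E(Ω̃). -/
noncomputable def hE (μ : V → V → ℝ) (Ω : Finset V) : ℝ :=
  sInf { r : ℝ | ∃ A : Finset V, A ⊆ clos μ Ω ∧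
    0 < msum μ Ω (A ∩ bdry μ Ω) ∧
    msum μ Ω (A ∩ bdry μ Ω) ≤ msum μ Ω (bdry μ Ω) / 2 ∧
    r = cut μ Ω A / msum μ Ω (A ∩ bdry μ Ω) }

/-- The Jammes-type Cheeger constant h_J(Ω̃). -/
noncomputable def hJ (μ : V → V → ℝ) (Ω : Finset V) : ℝ :=
  sInf { r : ℝ | ∃ A : Finset V, A ⊆ clos μ Ω ∧
    (A ∩ bdry μ Ω).Nonempty ∧
    msum μ Ω A ≤ msum μ Ω (clos μ Ω) / 2 ∧
    r = cut μ Ω A / msum μ Ω (A ∩ bdry μ Ω) }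

/-- The classical Cheeger constant h(Ω̃). -/
noncomputable def cheeger (μ : V → V → ℝ) (Ω : Finset V) : ℝ :=
  sInf { r : ℝ | ∃ A : Finset V, A ⊆ clos μ Ω ∧ A.Nonempty ∧
    msum μ Ω A ≤ msum μ Ω (clos μ Ω) / 2 ∧
    r = cut μ Ω A / msum μ Ω A }

section LayerCake

open MeasureTheory Set

lemma ite_lt_eq_indicator (a c : ℝ) :
    (fun s : ℝ => if s < a then c else 0) = (Iio a).indicator fun _ => c := by
  ext s
  simp [indicator_apply]

lemma integrable_ite_lt (a c : ℝ) :
    Integrable (fun s : ℝ => if s < a then c else 0) (volume.restrict (Ioi 0)) := by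
  rw [ite_lt_eq_indicator, integrable_indicator_iff measurableSet_Iio]
  refine integrableOn_const ?_
  rw [Measure.restrict_apply measurableSet_Iio, Iio_inter_Ioi]
  exact measure_Ioo_lt_top.ne

lemma setIntegral_Ioi_ite_lt {a : ℝ} (ha : 0 ≤ a) (c : ℝ) :
    ∫ s in Ioi 0, (if s < a then c else 0) = a * c := by
  rw [ite_lt_eq_indicator, integral_indicator_const _ measurableSet_Iio,
    measureReal_restrict_apply measurableSet_Iio, Iio_inter_Ioi, Real.volume_real_Ioo_of_le ha,
    sub_zero, smul_eq_mul]

lemma ite_lt_iff_lt_eq (a b s : ℝ) :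
    (if (s < a ↔ s < b) then (0 : ℝ) else 1) =
      (if s < a then 1 else 0) + (if s < b then 1 else 0) - 2 * if s < min a b then 1 else 0 := by
  simp only [lt_min_iff]
  split_ifs <;> simp_all
  norm_num

lemma integrable_ite_lt_iff_lt (a b : ℝ) :
    Integrable (fun s : ℝ => if (s < a ↔ s < b) then (0 : ℝ) else 1) (volume.restrict (Ioi 0)) := by
  simp only [ite_lt_iff_lt_eq]
  exact ((integrable_ite_lt a 1).add (integrable_ite_lt b 1)).sub
    ((integrable_ite_lt _ 1).const_mul 2)

lemma setIntegral_Ioi_ite_lt_iff_lt {a b : ℝ} (ha : 0 ≤ a) (hb : 0 ≤ b) :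
    ∫ s in Ioi 0, (if (s < a ↔ s < b) then (0 : ℝ) else 1) = |a - b| := by
  simp only [ite_lt_iff_lt_eq]
  rw [integral_sub, integral_add, integral_const_mul, setIntegral_Ioi_ite_lt ha,
    setIntegral_Ioi_ite_lt hb, setIntegral_Ioi_ite_lt (le_min ha hb), ← max_sub_min_eq_abs']
  · linarith [min_add_max a b]
  all_goals first
    | exact integrable_ite_lt _ _
    | exact (integrable_ite_lt _ _).add (integrable_ite_lt _ _)
    | exact (integrable_ite_lt _ _).const_mul 2

end LayerCake

lemma exists_median {ι : Type*} (B : Finset ι) (f : ι → ℝ) {m : ι → ℝ} (hm : ∀ x, 0 ≤ m x) :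
    ∃ t, ∑ x ∈ B.filter (fun x => t < f x), m x ≤ (∑ x ∈ B, m x) / 2 ∧
      ∑ x ∈ B.filter (fun x => f x < t), m x ≤ (∑ x ∈ B, m x) / 2 := by
  have hM : 0 ≤ ∑ x ∈ B, m x := sum_nonneg fun x _ => hm x
  rcases B.eq_empty_or_nonempty with rfl | hB
  · exact ⟨0, by simp⟩
  set S := B.filter fun x => ∑ y ∈ B.filter (fun y => f x < f y), m y ≤ (∑ x ∈ B, m x) / 2
  have hS : S.Nonempty := by
    obtain ⟨x, hx, hmax⟩ := exists_max_image B f hB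
    refine ⟨x, mem_filter.2 ⟨hx, ?_⟩⟩
    rw [filter_false_of_mem fun y hy => not_lt.2 (hmax y hy), sum_empty]
    positivity
  obtain ⟨x₀, hx₀, hmin⟩ := exists_min_image S f hS
  refine ⟨f x₀, (mem_filter.1 hx₀).2, ?_⟩
  rcases (B.filter fun x => f x < f x₀).eq_empty_or_nonempty with hlow | hlow
  · rw [hlow, sum_empty]
    positivity
  obtain ⟨y₀, hy₀, hmax⟩ := exists_max_image _ f hlow
  have hy₀B := (mem_filter.1 hy₀).1
  -- by minimality of `x₀`, the next lower value `f y₀` has more than half the mass above it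
  have hy₀S : (∑ y ∈ B, m y) / 2 < ∑ y ∈ B.filter (fun y => f y₀ < f y), m y := by
    by_contra! h
    exact (not_le.2 (mem_filter.1 hy₀).2) (hmin y₀ (mem_filter.2 ⟨hy₀B, h⟩))
  have hsplit : (B.filter fun x => f x < f x₀) = B.filter fun y => ¬ f y₀ < f y := by
    refine filter_congr fun y hy => ⟨fun h => not_lt.2 (hmax y (mem_filter.2 ⟨hy, h⟩)),
      fun h => (not_lt.1 h).trans_lt (mem_filter.1 hy₀).2⟩
  rw [hsplit]
  linarith [sum_filter_add_sum_filter_not B (fun y => f y₀ < f y) m]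

lemma max_zero_sq_add_max_neg_zero_sq (a : ℝ) : max a 0 ^ 2 + max (-a) 0 ^ 2 = a ^ 2 := by
  rcases le_total a 0 with ha | ha
  · rw [max_eq_right ha, max_eq_left (neg_nonneg.2 ha)]
    ring
  · rw [max_eq_left ha, max_eq_right (neg_nonpos.2 ha)]
    ring

lemma sq_sub_max_zero_add_sq_sub_max_neg_zero_le (a b : ℝ) :
    (max a 0 - max b 0) ^ 2 + (max (-a) 0 - max (-b) 0) ^ 2 ≤ (a - b) ^ 2 := by
  rcases le_total a 0 with ha | ha <;> rcases le_total b 0 with hb | hb <;>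
    simp only [max_eq_right, max_eq_left, ha, hb, neg_nonneg, neg_nonpos] <;> nlinarith

section Graph

variable {μ : V → V → ℝ} {Ω : Finset V}

lemma mem_bdry {x : V} : x ∈ bdry μ Ω ↔ x ∉ Ω ∧ ∃ y ∈ Ω, 0 < μ x y := by
  simp [bdry]

lemma disjoint_bdry : Disjoint Ω (bdry μ Ω) :=
  disjoint_left.2 fun _ hx hb => (mem_bdry.1 hb).1 hx

lemma subset_clos : Ω ⊆ clos μ Ω := subset_union_left

lemma bdry_subset_clos : bdry μ Ω ⊆ clos μ Ω := subset_union_right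

lemma vm_of_mem {x : V} (hx : x ∈ Ω) : vm μ Ω x = ∑ y, μ x y := if_pos hx

lemma vm_of_not_mem {x : V} (hx : x ∉ Ω) : vm μ Ω x = ∑ y ∈ Ω, μ x y := if_neg hx

lemma vm_nonneg (hnn : ∀ x y, 0 ≤ μ x y) (x : V) : 0 ≤ vm μ Ω x := by
  unfold vm
  split <;> exact sum_nonneg fun y _ => hnn _ _

lemma vm_pos_of_mem_bdry (hnn : ∀ x y, 0 ≤ μ x y) {x : V} (hx : x ∈ bdry μ Ω) :
    0 < vm μ Ω x := by
  obtain ⟨hxΩ, y, hy, hxy⟩ := mem_bdry.1 hx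
  rw [vm_of_not_mem hxΩ]
  exact hxy.trans_le (single_le_sum (fun z _ => hnn x z) hy)

lemma msum_nonneg (hnn : ∀ x y, 0 ≤ μ x y) (B : Finset V) : 0 ≤ msum μ Ω B :=
  sum_nonneg fun x _ => vm_nonneg hnn x

lemma msum_mono (hnn : ∀ x y, 0 ≤ μ x y) {A B : Finset V} (h : A ⊆ B) :
    msum μ Ω A ≤ msum μ Ω B :=
  sum_le_sum_of_subset_of_nonneg h fun x _ _ => vm_nonneg hnn x

lemma eq_zero_of_not_mem_clos (hsym : ∀ x y, μ x y = μ y x) (hnn : ∀ x y, 0 ≤ μ x y)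
    {x y : V} (hx : x ∈ Ω) (hy : y ∉ clos μ Ω) : μ x y = 0 := by
  refine ((hnn x y).eq_or_lt.resolve_right fun hxy => hy ?_).symm
  refine bdry_subset_clos (mem_bdry.2 ⟨fun hyΩ => hy (subset_clos hyΩ), x, hx, ?_⟩)
  rwa [hsym]

lemma vm_eq_sum_clos (hsym : ∀ x y, μ x y = μ y x) (hnn : ∀ x y, 0 ≤ μ x y) {x : V}
    (hx : x ∈ Ω) : vm μ Ω x = ∑ y ∈ Ω, μ x y + ∑ y ∈ bdry μ Ω, μ x y := by
  rw [vm_of_mem hx, ← sum_union disjoint_bdry]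
  exact (sum_subset (subset_univ _) fun y _ hy => eq_zero_of_not_mem_clos hsym hnn hx hy).symm

/-- An edge inside `Ω` occurs twice in `Ω × Ω̄`, once from each endpoint. -/
noncomputable def pairWeight (μ : V → V → ℝ) (Ω : Finset V) (p : V × V) : ℝ :=
  if p.2 ∈ Ω then μ p.1 p.2 / 2 else μ p.1 p.2

omit [Fintype V] in
lemma pairWeight_nonneg (hnn : ∀ x y, 0 ≤ μ x y) (p : V × V) : 0 ≤ pairWeight μ Ω p := by
  unfold pairWeight
  split_ifs <;> linarith [hnn p.1 p.2]

lemma edgeSum_eq_sum (F : V → V → ℝ) :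
    edgeSum μ Ω F = ∑ p ∈ Ω ×ˢ clos μ Ω, pairWeight μ Ω p * F p.1 p.2 := by
  rw [sum_product, edgeSum, sum_div, ← sum_add_distrib]
  refine sum_congr rfl fun x _ => ?_
  rw [clos, sum_union disjoint_bdry, sum_div]
  congr 1 <;> refine sum_congr rfl fun y hy => ?_
  · simp [pairWeight, hy]; ring
  · simp [pairWeight, (mem_bdry.1 hy).1]

lemma edgeSum_congr {F G : V → V → ℝ} (h : ∀ x ∈ Ω, ∀ y ∈ clos μ Ω, F x y = G x y) :
    edgeSum μ Ω F = edgeSum μ Ω G := by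
  simp only [edgeSum_eq_sum]
  exact sum_congr rfl fun p hp => by rw [h p.1 (mem_product.1 hp).1 p.2 (mem_product.1 hp).2]

lemma edgeSum_mono (hnn : ∀ x y, 0 ≤ μ x y) {F G : V → V → ℝ} (h : ∀ x y, F x y ≤ G x y) :
    edgeSum μ Ω F ≤ edgeSum μ Ω G := by
  simp only [edgeSum_eq_sum]
  exact sum_le_sum fun p _ => mul_le_mul_of_nonneg_left (h _ _) (pairWeight_nonneg hnn p)

lemma edgeSum_nonneg (hnn : ∀ x y, 0 ≤ μ x y) {F : V → V → ℝ} (h : ∀ x y, 0 ≤ F x y) :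
    0 ≤ edgeSum μ Ω F := by
  simpa [edgeSum] using edgeSum_mono (Ω := Ω) hnn h

lemma edgeSum_add (F G : V → V → ℝ) :
    edgeSum μ Ω (fun x y => F x y + G x y) = edgeSum μ Ω F + edgeSum μ Ω G := by
  simp only [edgeSum_eq_sum, mul_add, sum_add_distrib]

lemma edgeSum_const_mul (c : ℝ) (F : V → V → ℝ) :
    edgeSum μ Ω (fun x y => c * F x y) = c * edgeSum μ Ω F := by
  simp only [edgeSum_eq_sum, mul_sum]
  exact sum_congr rfl fun p _ => by ring

lemma edgeSum_mul_sq_le (hnn : ∀ x y, 0 ≤ μ x y) (F G : V → V → ℝ) :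
    edgeSum μ Ω (fun x y => F x y * G x y) ^ 2 ≤
      edgeSum μ Ω (fun x y => F x y ^ 2) * edgeSum μ Ω (fun x y => G x y ^ 2) := by
  simp only [edgeSum_eq_sum]
  refine sum_sq_le_sum_mul_sum_of_sq_le_mul _
    (fun p _ => mul_nonneg (pairWeight_nonneg hnn p) (sq_nonneg _))
    (fun p _ => mul_nonneg (pairWeight_nonneg hnn p) (sq_nonneg _)) fun p _ => le_of_eq ?_
  ring

lemma edgeSum_add_eq_sum_clos (hsym : ∀ x y, μ x y = μ y x) (hnn : ∀ x y, 0 ≤ μ x y)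
    (a : V → ℝ) : edgeSum μ Ω (fun x y => a x + a y) = ∑ x ∈ clos μ Ω, a x * vm μ Ω x := by
  have hinner : ∑ x ∈ Ω, ∑ y ∈ Ω, μ x y * a y = ∑ x ∈ Ω, ∑ y ∈ Ω, μ x y * a x := by
    rw [sum_comm]
    exact sum_congr rfl fun x _ => sum_congr rfl fun y _ => by rw [hsym]
  have hbdry : ∑ x ∈ Ω, ∑ y ∈ bdry μ Ω, μ x y * a y = ∑ y ∈ bdry μ Ω, a y * vm μ Ω y := by
    rw [sum_comm]
    refine sum_congr rfl fun y hy => ?_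
    rw [vm_of_not_mem (mem_bdry.1 hy).1, mul_sum]
    exact sum_congr rfl fun x _ => by rw [hsym]; ring
  have hint : ∑ x ∈ Ω, a x * vm μ Ω x =
      ∑ x ∈ Ω, ∑ y ∈ Ω, μ x y * a x + ∑ x ∈ Ω, ∑ y ∈ bdry μ Ω, μ x y * a x := by
    rw [← sum_add_distrib]
    refine sum_congr rfl fun x hx => ?_
    rw [vm_eq_sum_clos hsym hnn hx, mul_add, mul_sum, mul_sum]
    congr 1 <;> exact sum_congr rfl fun y _ => mul_comm _ _
  simp only [edgeSum, mul_add, sum_add_distrib, hinner, hbdry, clos, sum_union disjoint_bdry, hint]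
  ring

lemma isHarmonic_of_sum_eq_zero {u : V → ℝ} (h : ∀ x ∈ Ω, ∑ y, μ x y * (u y - u x) = 0) :
    IsHarmonic μ Ω u :=
  fun x hx => by rw [lap, h x hx, zero_div]

lemma IsHarmonic.const_mul {u : V → ℝ} (hu : IsHarmonic μ Ω u) (c : ℝ) :
    IsHarmonic μ Ω (fun x => c * u x) := by
  intro x hx
  have hsum : ∑ y, μ x y * (c * u y - c * u x) = c * ∑ y, μ x y * (u y - u x) := by
    rw [mul_sum]
    exact sum_congr rfl fun y _ => by ring
  rw [lap, hsum, mul_div_assoc, ← lap, hu x hx, mul_zero]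

theorem maximum_principle (hnn : ∀ x y, 0 ≤ μ x y) (hconn : TilConnected μ Ω)
    (hB : (bdry μ Ω).Nonempty) {u : V → ℝ} (hout : ∀ x ∉ Ω, u x ≤ 0)
    (hharm : ∀ x ∈ Ω, ∑ y, μ x y * (u y - u x) = 0) (x : V) : u x ≤ 0 := by
  obtain ⟨z, hz⟩ := hB
  obtain ⟨x₀, -, hmax⟩ := exists_max_image univ u ⟨z, mem_univ z⟩
  by_contra! hx
  have hpos : 0 < u x₀ := hx.trans_le (hmax x (mem_univ x))
  have hx₀ : x₀ ∈ Ω := by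
    by_contra h
    linarith [hout x₀ h]
  have hprop : ∀ b, Relation.ReflTransGen (tilAdj μ Ω) x₀ b → u b = u x₀ := by
    intro b hb
    induction hb with
    | refl => rfl
    | @tail a b _ hab ih =>
      have ha : a ∈ Ω := by
        by_contra h
        linarith [hout a h]
      have hterm := (sum_eq_zero_iff_of_nonpos fun y _ =>
        mul_nonpos_of_nonneg_of_nonpos (hnn a y) (by linarith [hmax y (mem_univ y)])).1
        (hharm a ha) b (mem_univ b)
      rcases mul_eq_zero.1 hterm with h | h
      · exact absurd h hab.1.ne'
      · linarith
  have hz_max := hprop z (hconn x₀ (subset_clos hx₀) z (bdry_subset_clos hz))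
  linarith [hout z (mem_bdry.1 hz).1]

theorem exists_isHarmonic_extension (hnn : ∀ x y, 0 ≤ μ x y) (hconn : TilConnected μ Ω)
    (hB : (bdry μ Ω).Nonempty) (φ : V → ℝ) :
    ∃ u : V → ℝ, IsHarmonic μ Ω u ∧ ∀ x ∉ Ω, u x = φ x := by
  let L : (V → ℝ) →ₗ[ℝ] (V → ℝ) :=
    { toFun := fun u x => if x ∈ Ω then ∑ y, μ x y * (u y - u x) else u x
      map_add' := fun u v => by
        ext x
        simp only [Pi.add_apply]
        split_ifs
        · rw [← sum_add_distrib]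
          exact sum_congr rfl fun y _ => by ring
        · rfl
      map_smul' := fun c u => by
        ext x
        simp only [Pi.smul_apply, smul_eq_mul, RingHom.id_apply]
        split_ifs
        · rw [mul_sum]
          exact sum_congr rfl fun y _ => by ring
        · rfl }
  have hL : Function.Injective L := by
    refine (injective_iff_map_eq_zero L).2 fun u hu => ?_
    have hval : ∀ x, (if x ∈ Ω then ∑ y, μ x y * (u y - u x) else u x) = 0 :=
      fun x => congrFun hu x
    have hout : ∀ x ∉ Ω, u x = 0 := fun x hx => by simpa [hx] using hval x
    have hharm : ∀ x ∈ Ω, ∑ y, μ x y * (u y - u x) = 0 := fun x hx => by simpa [hx] using hval x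
    have hle := maximum_principle hnn hconn hB (fun x hx => (hout x hx).le) hharm
    have hge := maximum_principle hnn hconn hB (u := -u) (fun x hx => by simp [hout x hx])
      fun x hx => by
        rw [← neg_eq_zero, ← hharm x hx, ← sum_neg_distrib]
        exact sum_congr rfl fun y _ => by simp only [Pi.neg_apply]; ring
    ext x
    exact le_antisymm (hle x) (by simpa using hge x)
  obtain ⟨u, hu⟩ := (LinearMap.injective_iff_surjective.1 hL) fun x => if x ∈ Ω then 0 else φ x
  have hval : ∀ x, (if x ∈ Ω then ∑ y, μ x y * (u y - u x) else u x) =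
      if x ∈ Ω then 0 else φ x := fun x => congrFun hu x
  refine ⟨u, isHarmonic_of_sum_eq_zero fun x hx => ?_, fun x hx => ?_⟩
  · simpa [hx] using hval x
  · simpa [hx] using hval x

theorem exists_lambda1_competitor (hnn : ∀ x y, 0 ≤ μ x y) (hconn : TilConnected μ Ω)
    (hcard : 2 ≤ (bdry μ Ω).card) :
    ∃ u : V → ℝ, IsHarmonic μ Ω u ∧ ∑ x ∈ bdry μ Ω, u x ^ 2 * vm μ Ω x = 1 ∧
      ∑ x ∈ bdry μ Ω, u x * vm μ Ω x = 0 := by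
  obtain ⟨z₁, hz₁, z₂, hz₂, hne⟩ := one_lt_card.1 (show 1 < (bdry μ Ω).card by omega)
  have hm₁ := vm_pos_of_mem_bdry hnn hz₁
  have hm₂ := vm_pos_of_mem_bdry hnn hz₂
  obtain ⟨v, hv, hvφ⟩ := exists_isHarmonic_extension hnn hconn ⟨z₁, hz₁⟩ fun x =>
    if x = z₁ then vm μ Ω z₂ else if x = z₂ then -vm μ Ω z₁ else 0
  have hbdry : ∀ (F : ℝ → ℝ → ℝ), (∀ m, F 0 m = 0) →
      ∑ x ∈ bdry μ Ω, F (v x) (vm μ Ω x) =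
        F (vm μ Ω z₂) (vm μ Ω z₁) + F (-vm μ Ω z₁) (vm μ Ω z₂) := by
    intro F hF
    rw [sum_eq_add_of_mem z₁ z₂ hz₁ hz₂ hne fun x hx hx' => ?_,
      hvφ z₁ (mem_bdry.1 hz₁).1, hvφ z₂ (mem_bdry.1 hz₂).1, if_pos rfl, if_neg hne.symm,
      if_pos rfl]
    rw [hvφ x (mem_bdry.1 hx).1, if_neg hx'.1, if_neg hx'.2, hF]
  set c := vm μ Ω z₂ ^ 2 * vm μ Ω z₁ + vm μ Ω z₁ ^ 2 * vm μ Ω z₂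
  have hc : 0 < c := by positivity
  refine ⟨fun x => (√c)⁻¹ * v x, hv.const_mul _, ?_, ?_⟩
  · have := hbdry (fun a m => ((√c)⁻¹ * a) ^ 2 * m) (by simp)
    rw [this, mul_pow, mul_pow, inv_pow, Real.sq_sqrt hc.le, neg_sq, ← inv_mul_cancel₀ hc.ne']
    ring
  · have := hbdry (fun a m => (√c)⁻¹ * a * m) (by simp)
    rw [this]
    ring

section Coarea

open MeasureTheory Set

noncomputable def superlevel (μ : V → V → ℝ) (Ω : Finset V) (g : V → ℝ) (s : ℝ) : Finset V :=
  (clos μ Ω).filter fun x => s < g x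

lemma cut_superlevel (g : V → ℝ) (s : ℝ) :
    cut μ Ω (superlevel μ Ω g s) =
      edgeSum μ Ω fun x y => if (s < g x ↔ s < g y) then 0 else 1 :=
  edgeSum_congr fun x hx y hy => by simp [superlevel, subset_clos hx, hy]

lemma integral_edgeSum {F : V → V → ℝ → ℝ}
    (hF : ∀ x y, Integrable (F x y) (volume.restrict (Ioi 0))) :
    ∫ s in Ioi 0, edgeSum μ Ω (fun x y => F x y s) =
      edgeSum μ Ω fun x y => ∫ s in Ioi 0, F x y s := by
  simp only [edgeSum_eq_sum]
  rw [integral_finsetSum _ fun p _ => (hF _ _).const_mul _]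
  exact sum_congr rfl fun p _ => integral_const_mul _ _

lemma integrable_edgeSum {F : V → V → ℝ → ℝ}
    (hF : ∀ x y, Integrable (F x y) (volume.restrict (Ioi 0))) :
    Integrable (fun s => edgeSum μ Ω (fun x y => F x y s)) (volume.restrict (Ioi 0)) := by
  simp only [edgeSum_eq_sum]
  exact integrable_finsetSum _ fun p _ => (hF _ _).const_mul _

lemma integral_cut_superlevel {g : V → ℝ} (hg : ∀ x, 0 ≤ g x) :
    ∫ s in Ioi 0, cut μ Ω (superlevel μ Ω g s) = edgeSum μ Ω fun x y => |g x - g y| := by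
  simp only [cut_superlevel]
  rw [integral_edgeSum fun x y => integrable_ite_lt_iff_lt _ _]
  exact edgeSum_congr fun x _ y _ => setIntegral_Ioi_ite_lt_iff_lt (hg x) (hg y)

lemma msum_filter_lt (B : Finset V) (g : V → ℝ) (s : ℝ) :
    msum μ Ω (B.filter fun x => s < g x) = ∑ x ∈ B, if s < g x then vm μ Ω x else 0 :=
  sum_filter _ _

lemma integral_msum_filter_lt (B : Finset V) {g : V → ℝ} (hg : ∀ x, 0 ≤ g x) :
    ∫ s in Ioi 0, msum μ Ω (B.filter fun x => s < g x) = ∑ x ∈ B, g x * vm μ Ω x := by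
  simp only [msum_filter_lt]
  rw [integral_finsetSum _ fun x _ => integrable_ite_lt _ _]
  exact sum_congr rfl fun x _ => setIntegral_Ioi_ite_lt (hg x) _

/-- Co-area formula: integrate the hypothesis over the levels `s ∈ (0, ∞)`. -/
lemma mul_sum_le_edgeSum_of_superlevel (B : Finset V) {g : V → ℝ} (hg : ∀ x, 0 ≤ g x) {c : ℝ}
    (h : ∀ s, 0 < s → c * msum μ Ω (B.filter fun x => s < g x) ≤ cut μ Ω (superlevel μ Ω g s)) :
    c * ∑ x ∈ B, g x * vm μ Ω x ≤ edgeSum μ Ω fun x y => |g x - g y| := by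
  rw [← integral_msum_filter_lt B hg, ← integral_cut_superlevel hg, ← integral_const_mul]
  refine setIntegral_mono_on ?_ ?_ measurableSet_Ioi fun s hs => h s hs
  · simp only [msum_filter_lt]
    exact (integrable_finsetSum _ fun x _ => integrable_ite_lt _ _).const_mul _
  · simp only [cut_superlevel]
    exact integrable_edgeSum fun x y => integrable_ite_lt_iff_lt _ _

end Coarea

lemma cut_nonneg (hnn : ∀ x y, 0 ≤ μ x y) (A : Finset V) : 0 ≤ cut μ Ω A :=
  edgeSum_nonneg hnn fun x y => by split <;> norm_num

lemma cheeger_nonneg (hnn : ∀ x y, 0 ≤ μ x y) : 0 ≤ cheeger μ Ω :=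
  Real.sInf_nonneg fun _ ⟨A, _, _, _, hr⟩ => hr ▸ div_nonneg (cut_nonneg hnn A) (msum_nonneg hnn A)

lemma hJ_nonneg (hnn : ∀ x y, 0 ≤ μ x y) : 0 ≤ hJ μ Ω :=
  Real.sInf_nonneg fun _ ⟨A, _, _, _, hr⟩ => hr ▸ div_nonneg (cut_nonneg hnn A) (msum_nonneg hnn _)

lemma cheeger_mul_msum_le_cut (hnn : ∀ x y, 0 ≤ μ x y) {A : Finset V} (hA : A ⊆ clos μ Ω)
    (hhalf : msum μ Ω A ≤ msum μ Ω (clos μ Ω) / 2) : cheeger μ Ω * msum μ Ω A ≤ cut μ Ω A := by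
  rcases A.eq_empty_or_nonempty with rfl | hne
  · simpa [msum] using cut_nonneg hnn ∅
  refine mul_le_of_le_div₀ (cut_nonneg hnn A) (msum_nonneg hnn A)
    (csInf_le ?_ ⟨A, hA, hne, hhalf, rfl⟩)
  exact ⟨0, fun _ ⟨B, _, _, _, hr⟩ => hr ▸ div_nonneg (cut_nonneg hnn B) (msum_nonneg hnn B)⟩

lemma hJ_mul_msum_inter_le_cut (hnn : ∀ x y, 0 ≤ μ x y) {A : Finset V} (hA : A ⊆ clos μ Ω)
    (hhalf : msum μ Ω A ≤ msum μ Ω (clos μ Ω) / 2) :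
    hJ μ Ω * msum μ Ω (A ∩ bdry μ Ω) ≤ cut μ Ω A := by
  rcases (A ∩ bdry μ Ω).eq_empty_or_nonempty with he | hne
  · simpa [msum, he] using cut_nonneg hnn A
  refine mul_le_of_le_div₀ (cut_nonneg hnn A) (msum_nonneg hnn _)
    (csInf_le ?_ ⟨A, hA, hne, hhalf, rfl⟩)
  exact ⟨0, fun _ ⟨B, _, _, _, hr⟩ => hr ▸ div_nonneg (cut_nonneg hnn B) (msum_nonneg hnn _)⟩

lemma sq_edgeSum_abs_sq_sub_sq_le (hsym : ∀ x y, μ x y = μ y x) (hnn : ∀ x y, 0 ≤ μ x y)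
    {w : V → ℝ} (hw : ∀ x, 0 ≤ w x) :
    (edgeSum μ Ω fun x y => |w x ^ 2 - w y ^ 2|) ^ 2 ≤
      dirichlet μ Ω w * (2 * ∑ x ∈ clos μ Ω, w x ^ 2 * vm μ Ω x) := by
  have hfactor : ∀ x y, |w x ^ 2 - w y ^ 2| = |w x - w y| * (w x + w y) := fun x y => by
    rw [← abs_of_nonneg (add_nonneg (hw x) (hw y)), ← abs_mul]
    ring_nf
  have hsum : edgeSum μ Ω (fun x y => (w x + w y) ^ 2) ≤
      2 * ∑ x ∈ clos μ Ω, w x ^ 2 * vm μ Ω x := by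
    rw [← edgeSum_add_eq_sum_clos hsym hnn, ← edgeSum_const_mul]
    exact edgeSum_mono hnn fun x y => by nlinarith [sq_nonneg (w x - w y)]
  simp only [hfactor]
  calc _ ≤ edgeSum μ Ω (fun x y => |w x - w y| ^ 2) * edgeSum μ Ω (fun x y => (w x + w y) ^ 2) :=
        edgeSum_mul_sq_le hnn _ _
    _ ≤ _ := by
      simp only [sq_abs]
      exact mul_le_mul_of_nonneg_left hsum (edgeSum_nonneg hnn fun x y => sq_nonneg _)

lemma cheeger_mul_hJ_mul_sum_bdry_le_two_dirichlet (hsym : ∀ x y, μ x y = μ y x)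
    (hnn : ∀ x y, 0 ≤ μ x y) {w : V → ℝ} (hw : ∀ x, 0 ≤ w x)
    (hsupp : msum μ Ω ((clos μ Ω).filter fun x => 0 < w x) ≤ msum μ Ω (clos μ Ω) / 2) :
    cheeger μ Ω * hJ μ Ω * ∑ x ∈ bdry μ Ω, w x ^ 2 * vm μ Ω x ≤ 2 * dirichlet μ Ω w := by
  set P := ∑ x ∈ clos μ Ω, w x ^ 2 * vm μ Ω x
  set Q := ∑ x ∈ bdry μ Ω, w x ^ 2 * vm μ Ω x
  set T := edgeSum μ Ω fun x y => |w x ^ 2 - w y ^ 2|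
  have hg : ∀ x, 0 ≤ w x ^ 2 := fun x => sq_nonneg _
  have hhalf : ∀ s, 0 < s →
      msum μ Ω (superlevel μ Ω (fun x => w x ^ 2) s) ≤ msum μ Ω (clos μ Ω) / 2 := by
    refine fun s hs => (msum_mono hnn (monotone_filter_right _ fun x _ hx => ?_)).trans hsupp
    refine (hw x).lt_of_ne fun h => ?_
    simp only [← h] at hx
    linarith
  have hP : cheeger μ Ω * P ≤ T := mul_sum_le_edgeSum_of_superlevel _ hg fun s hs =>
    cheeger_mul_msum_le_cut hnn (filter_subset _ _) (hhalf s hs)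
  have hQ : hJ μ Ω * Q ≤ T := mul_sum_le_edgeSum_of_superlevel _ hg fun s hs => by
    have hinter : (bdry μ Ω).filter (fun x => s < w x ^ 2) =
        superlevel μ Ω (fun x => w x ^ 2) s ∩ bdry μ Ω := by
      ext x
      simp only [superlevel, mem_filter, mem_inter]
      exact ⟨fun h => ⟨⟨bdry_subset_clos h.1, h.2⟩, h.1⟩, fun h => ⟨h.2, h.1.2⟩⟩
    rw [hinter]
    exact hJ_mul_msum_inter_le_cut hnn (filter_subset _ _) (hhalf s hs)
  have hT : T ^ 2 ≤ dirichlet μ Ω w * (2 * P) := sq_edgeSum_abs_sq_sub_sq_le hsym hnn hw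
  have hQP : Q ≤ P := sum_le_sum_of_subset_of_nonneg bdry_subset_clos fun x _ _ =>
    mul_nonneg (hg x) (vm_nonneg hnn x)
  have hQ₀ : 0 ≤ Q := sum_nonneg fun x _ => mul_nonneg (hg x) (vm_nonneg hnn x)
  have hD : 0 ≤ dirichlet μ Ω w := edgeSum_nonneg hnn fun x y => sq_nonneg _
  have hh := cheeger_nonneg (Ω := Ω) hnn
  have hj := hJ_nonneg (Ω := Ω) hnn
  rcases (hQ₀.trans hQP).eq_or_lt with hP₀ | hP₀
  · rw [le_antisymm (hP₀ ▸ hQP) hQ₀, mul_zero]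
    linarith
  · refine le_of_mul_le_mul_left ?_ hP₀
    have hTT : (cheeger μ Ω * P) * (hJ μ Ω * Q) ≤ T * T :=
      mul_le_mul hP hQ (mul_nonneg hj hQ₀) ((mul_nonneg hh hP₀.le).trans hP)
    nlinarith

lemma cheeger_mul_hJ_le_two_dirichlet (hsym : ∀ x y, μ x y = μ y x) (hnn : ∀ x y, 0 ≤ μ x y)
    {u : V → ℝ} (hnorm : ∑ x ∈ bdry μ Ω, u x ^ 2 * vm μ Ω x = 1)
    (hmean : ∑ x ∈ bdry μ Ω, u x * vm μ Ω x = 0) :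
    cheeger μ Ω * hJ μ Ω ≤ 2 * dirichlet μ Ω u := by
  obtain ⟨t, hup, hdown⟩ := exists_median (clos μ Ω) u (vm_nonneg (Ω := Ω) hnn)
  have hkey := fun (w : V → ℝ) (hw : ∀ x, 0 ≤ w x) =>
    cheeger_mul_hJ_mul_sum_bdry_le_two_dirichlet (Ω := Ω) hsym hnn hw
  have hp := hkey (fun x => max (u x - t) 0) (fun x => le_max_right _ _) (by
    simpa only [msum, lt_max_iff, sub_pos, lt_irrefl, or_false] using hup)
  have hm := hkey (fun x => max (-(u x - t)) 0) (fun x => le_max_right _ _) (by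
    simpa only [msum, lt_max_iff, neg_sub, sub_pos, lt_irrefl, or_false] using hdown)
  have hsplit : dirichlet μ Ω (fun x => max (u x - t) 0) +
      dirichlet μ Ω (fun x => max (-(u x - t)) 0) ≤ dirichlet μ Ω u := by
    rw [dirichlet, dirichlet, ← edgeSum_add]
    exact edgeSum_mono hnn fun x y => by
      simpa using sq_sub_max_zero_add_sq_sub_max_neg_zero_le (u x - t) (u y - t)
  have hshift : 1 ≤ ∑ x ∈ bdry μ Ω, (u x - t) ^ 2 * vm μ Ω x := by
    have hexp : ∑ x ∈ bdry μ Ω, (u x - t) ^ 2 * vm μ Ω x =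
        1 - 2 * t * 0 + t ^ 2 * ∑ x ∈ bdry μ Ω, vm μ Ω x := by
      rw [← hnorm, ← hmean, mul_sum, mul_sum, ← sum_sub_distrib, ← sum_add_distrib]
      exact sum_congr rfl fun x _ => by ring
    have := sum_nonneg fun x (_ : x ∈ bdry μ Ω) => vm_nonneg (Ω := Ω) hnn x
    rw [hexp]
    nlinarith [sq_nonneg t]
  have hparts : ∑ x ∈ bdry μ Ω, (u x - t) ^ 2 * vm μ Ω x =
      ∑ x ∈ bdry μ Ω, max (u x - t) 0 ^ 2 * vm μ Ω x +
        ∑ x ∈ bdry μ Ω, max (-(u x - t)) 0 ^ 2 * vm μ Ω x := by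
    rw [← sum_add_distrib]
    exact sum_congr rfl fun x _ => by rw [← add_mul, max_zero_sq_add_max_neg_zero_sq]
  have hch := mul_nonneg (cheeger_nonneg (Ω := Ω) hnn) (hJ_nonneg (Ω := Ω) hnn)
  calc cheeger μ Ω * hJ μ Ω ≤ cheeger μ Ω * hJ μ Ω * ∑ x ∈ bdry μ Ω, (u x - t) ^ 2 * vm μ Ω x :=
        le_mul_of_one_le_right hch hshift
    _ ≤ _ := by rw [hparts, mul_add]; linarith

end Graph

/-- Theorem 1.5 (Jammes-type Cheeger estimate): λ₁(Ω) ≥ ½ h(Ω̃) h_J(Ω̃). -/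
theorem stmt_2 (μ : V → V → ℝ) (Ω : Finset V)
    (hsym : ∀ x y, μ x y = μ y x) (hnn : ∀ x y, 0 ≤ μ x y)
    (hconn : TilConnected μ Ω) (hcard : 2 ≤ (bdry μ Ω).card) :
    lambda1 μ Ω ≥ (1 / 2) * cheeger μ Ω * hJ μ Ω := by
  obtain ⟨u₀, hu₀, hnorm₀, hmean₀⟩ := exists_lambda1_competitor hnn hconn hcard
  refine le_csInf ⟨_, u₀, hu₀, hnorm₀, hmean₀, rfl⟩ ?_
  rintro _ ⟨u, -, hnorm, hmean, rfl⟩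
  linarith [cheeger_mul_hJ_le_two_dirichlet hsym hnn hnorm hmean]
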